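/- Let D^{p,q} be a double complex of right R-modules. If every row D^{*,q} is exact, then the right truncated totalisation rtTot D (whose degree-n term is the right truncated product over p of D^{p,n-p}, i.e. sequences (x_p) with x_p = 0 for p ≫ 0, with differential d^h + d^v) is acyclic. -/

import Mathlib

/-!
Given a cycle `x` with `x_p = 0` for `p > k`, a primitive `y` is built by descending recursion:
`y_p = 0` for `p > k`, and `y_p` is a horizontal preimage of `x_{p+1} - d^v y_{p+1}`.
This element is a horizontal cycle because `d^h d^v = -d^v d^h` turns `d^h (x_{p+1} - d^v y_{p+1})`
into `d^h x_{p+1} + d^v x_{p+2} - d^v d^v y_{p+2}`, which vanishes as `x` is a cycle. The recursion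
never stops, so `y` is nonzero in infinitely many negative degrees: this is where the right
truncated product, rather than the direct sum, is needed.
-/

noncomputable section

namespace Novikov
variable (S : Type*) [Semiring S]
variable (D : ℤ → ℤ → Type*) [∀ p q, AddCommGroup (D p q)] [∀ p q, Module S (D p q)]

/-- Transport along equalities of the indices of a bigraded family of modules. -/
def lcast (p p' q q' : ℤ) (h1 : p = p') (h2 : q = q') : D p q →ₗ[S] D p' q' := by
  subst h1; subst h2; exact LinearMap.id

variable (dh : ∀ p q, D p q →ₗ[S] D (p + 1) q) (dv : ∀ p q, D p q →ₗ[S] D p (q + 1))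

/-- The component at `p` of the total differential `d = d^h + d^v`, mapping degree-`n`
elements of the totalisation (families `(x_p)_p` with `x_p ∈ D^{p, n-p}`) to degree `n+1`. -/
def totalD (n : ℤ) (x : ∀ p, D p (n - p)) (p : ℤ) : D p (n + 1 - p) :=
  lcast S D p p (n - p + 1) (n + 1 - p) rfl (by ring) (dv p (n - p) (x p)) +
    lcast S D (p - 1 + 1) p (n - (p - 1)) (n + 1 - p) (by ring) (by ring)
      (dh (p - 1) (n - (p - 1)) (x (p - 1)))

end Novikov

namespace Novikov

variable {S : Type*} [Semiring S]
  {D : ℤ → ℤ → Type*} [∀ p q, AddCommGroup (D p q)] [∀ p q, Module S (D p q)]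

section lcast

@[simp]
lemma lcast_rfl {p q : ℤ} (v : D p q) : lcast S D p p q q rfl rfl v = v := rfl

@[simp]
lemma lcast_lcast {p p' p'' q q' q'' : ℤ} (h₁ : p = p') (h₂ : q = q') (h₁' : p' = p'')
    (h₂' : q' = q'') (v : D p q) :
    lcast S D p' p'' q' q'' h₁' h₂' (lcast S D p p' q q' h₁ h₂ v) =
      lcast S D p p'' q q'' (h₁.trans h₁') (h₂.trans h₂') v := by
  subst h₁ h₂ h₁' h₂'; rfl

lemma lcast_apply {f : ℤ → ℤ} (x : ∀ p, D p (f p)) {p p' : ℤ} (h : p = p') :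
    lcast S D p p' (f p) (f p') h (congrArg f h) (x p) = x p' := by
  subst h; rfl

lemma dh_lcast (dh : ∀ p q, D p q →ₗ[S] D (p + 1) q) {p p' q q' : ℤ} (h₁ : p = p')
    (h₂ : q = q') (v : D p q) :
    dh p' q' (lcast S D p p' q q' h₁ h₂ v) =
      lcast S D (p + 1) (p' + 1) q q' (congrArg (· + 1) h₁) h₂ (dh p q v) := by
  subst h₁ h₂; rfl

lemma dv_lcast (dv : ∀ p q, D p q →ₗ[S] D p (q + 1)) {p p' q q' : ℤ} (h₁ : p = p')
    (h₂ : q = q') (v : D p q) :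
    dv p' q' (lcast S D p p' q q' h₁ h₂ v) =
      lcast S D p p' (q + 1) (q' + 1) h₁ (congrArg (· + 1) h₂) (dv p q v) := by
  subst h₁ h₂; rfl

end lcast

variable {dh : ∀ p q, D p q →ₗ[S] D (p + 1) q} {dv : ∀ p q, D p q →ₗ[S] D p (q + 1)}

lemma totalD_succ (n : ℤ) (x : ∀ p, D p (n - p)) (p : ℤ) :
    totalD S D dh dv n x (p + 1) =
      lcast S D (p + 1) (p + 1) (n - (p + 1) + 1) (n + 1 - (p + 1)) rfl (by ring)
          (dv (p + 1) (n - (p + 1)) (x (p + 1))) +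
        lcast S D (p + 1) (p + 1) (n - p) (n + 1 - (p + 1)) rfl (by ring)
          (dh p (n - p) (x p)) := by
  rw [totalD, ← lcast_apply (S := S) (f := fun p => n - p) x (show p = p + 1 - 1 by ring),
    dh_lcast, lcast_lcast]

section zigzag

variable (dv) (s : ∀ p q, D (p + 1) q → D p q) (n k : ℤ) (x : ∀ p, D p (n - p))

def liftTarget (p : ℤ) (w : D (p + 1) (n - 1 - (p + 1))) : D (p + 1) (n - 1 - p) :=
  lcast S D (p + 1) (p + 1) (n - (p + 1)) (n - 1 - p) rfl (by ring) (x (p + 1)) -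
    lcast S D (p + 1) (p + 1) (n - 1 - (p + 1) + 1) (n - 1 - p) rfl (by ring)
      (dv (p + 1) (n - 1 - (p + 1)) w)

def zigzagPrimitive (p : ℤ) : D p (n - 1 - p) :=
  if k < p then 0
  else s p (n - 1 - p) (liftTarget dv n x p (zigzagPrimitive (p + 1)))
termination_by (k + 1 - p).toNat
decreasing_by omega

lemma zigzagPrimitive_of_lt {p : ℤ} (hp : k < p) : zigzagPrimitive dv s n k x p = 0 := by
  rw [zigzagPrimitive, if_pos hp]

lemma zigzagPrimitive_of_le {p : ℤ} (hp : p ≤ k) :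
    zigzagPrimitive dv s n k x p =
      s p (n - 1 - p) (liftTarget dv n x p (zigzagPrimitive dv s n k x (p + 1))) := by
  rw [zigzagPrimitive, if_neg (not_lt.2 hp)]

variable {dv s n k x}

lemma dh_zigzagPrimitive
    (hs : ∀ p q (v : D (p + 1) q), dh (p + 1) q v = 0 → dh p q (s p q v) = v)
    (hx : ∀ p > k, x p = 0) {p : ℤ}
    (hp : dh (p + 1) (n - 1 - p) (liftTarget dv n x p (zigzagPrimitive dv s n k x (p + 1))) = 0) :
    dh p (n - 1 - p) (zigzagPrimitive dv s n k x p) =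
      liftTarget dv n x p (zigzagPrimitive dv s n k x (p + 1)) := by
  rcases lt_or_ge k p with hkp | hpk
  · rw [zigzagPrimitive_of_lt dv s n k x hkp, zigzagPrimitive_of_lt dv s n k x (by omega),
      liftTarget, hx (p + 1) (by omega)]
    simp
  · rw [zigzagPrimitive_of_le dv s n k x hpk]
    exact hs _ _ _ hp

end zigzag

lemma lcast_totalD_succ_of_dh_eq {n : ℤ} {x : ∀ p, D p (n - p)} {y : ∀ p, D p (n - 1 - p)} {p : ℤ}
    (hy : dh p (n - 1 - p) (y p) = liftTarget dv n x p (y (p + 1))) :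
    lcast S D (p + 1) (p + 1) (n - 1 + 1 - (p + 1)) (n - (p + 1)) rfl (by ring)
      (totalD S D dh dv (n - 1) y (p + 1)) = x (p + 1) := by
  rw [totalD_succ, hy, liftTarget]
  simp only [map_add, map_sub, lcast_lcast, lcast_rfl]
  abel

variable (hvv : ∀ p q (v : D p q), dv p (q + 1) (dv p q v) = 0)
  (hanti : ∀ p q (v : D p q), dh p (q + 1) (dv p q v) = - dv (p + 1) q (dh p q v))

include hvv hanti in
lemma dh_liftTarget_eq_zero {n : ℤ} {x : ∀ p, D p (n - p)} {y : ∀ p, D p (n - 1 - p)} {p : ℤ}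
    (hx : totalD S D dh dv n x (p + 1 + 1) = 0)
    (hy : dh (p + 1) (n - 1 - (p + 1)) (y (p + 1)) = liftTarget dv n x (p + 1) (y (p + 1 + 1))) :
    dh (p + 1) (n - 1 - p) (liftTarget dv n x p (y (p + 1))) = 0 := by
  rw [totalD_succ] at hx
  have hx' := congrArg (lcast S D _ _ _ (n - 1 - p) rfl (by ring)) hx
  simp only [map_add, map_zero, lcast_lcast] at hx'
  rw [liftTarget, map_sub, dh_lcast, dh_lcast, hanti, hy, liftTarget]
  simp only [map_neg, map_sub, dv_lcast, hvv, lcast_lcast, map_zero, sub_zero, sub_neg_eq_add]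
  exact (add_comm _ _).trans hx'

include hvv hanti in
lemma dh_liftTarget_zigzagPrimitive_eq_zero {s : ∀ p q, D (p + 1) q → D p q} {n k : ℤ}
    {x : ∀ p, D p (n - p)}
    (hs : ∀ p q (v : D (p + 1) q), dh (p + 1) q v = 0 → dh p q (s p q v) = v)
    (hxk : ∀ p > k, x p = 0) (hx : ∀ p, totalD S D dh dv n x p = 0) (p : ℤ) :
    dh (p + 1) (n - 1 - p) (liftTarget dv n x p (zigzagPrimitive dv s n k x (p + 1))) = 0 := by
  have of_ge : ∀ p ≥ k,
      dh (p + 1) (n - 1 - p) (liftTarget dv n x p (zigzagPrimitive dv s n k x (p + 1))) = 0 := by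
    intro p hp
    rw [zigzagPrimitive_of_lt dv s n k x (by omega), liftTarget, hxk (p + 1) (by omega)]
    simp
  obtain hkp | hpk := le_total k p
  · exact of_ge p hkp
  induction p, hpk using Int.leInductionDown with
  | base => exact of_ge k le_rfl
  | pred p _ ih =>
    rw [← sub_add_cancel p 1] at ih
    exact dh_liftTarget_eq_zero hvv hanti (hx _) (dh_zigzagPrimitive hs hxk ih)

end Novikov

open Novikov in
/-- Let `D^{p,q}` be a double complex of right `R`-modules (= left
`Rᵐᵒᵖ`-modules).  If every row `D^{*,q}` is exact, then the right truncated totalisation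
`rtTot D` — whose degree-`n` term consists of the families `(x_p)_p` with `x_p ∈ D^{p,n-p}`
and `x_p = 0` for `p ≫ 0`, with differential `d^h + d^v` — is acyclic. -/
theorem rtTot_acyclic_of_exact_rows
    (R : Type*) [Ring R]
    (D : ℤ → ℤ → Type*) [∀ p q, AddCommGroup (D p q)] [∀ p q, Module Rᵐᵒᵖ (D p q)]
    (dh : ∀ p q, D p q →ₗ[Rᵐᵒᵖ] D (p + 1) q) (dv : ∀ p q, D p q →ₗ[Rᵐᵒᵖ] D p (q + 1))
    (hvv : ∀ p q (v : D p q), dv p (q + 1) (dv p q v) = 0)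
    (hanti : ∀ p q (v : D p q), dh p (q + 1) (dv p q v) = - dv (p + 1) q (dh p q v))
    (hrow : ∀ p q (v : D (p + 1) q), dh (p + 1) q v = 0 → ∃ u : D p q, dh p q u = v) :
    ∀ (n : ℤ) (x : ∀ p, D p (n - p)),
      (∃ k, ∀ p > k, x p = 0) →
      (∀ p, totalD Rᵐᵒᵖ D dh dv n x p = 0) →
      ∃ y : ∀ p, D p (n - 1 - p),
        (∃ k, ∀ p > k, y p = 0) ∧
        ∀ p, lcast Rᵐᵒᵖ D p p (n - 1 + 1 - p) (n - p) rfl (by ring)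
          (totalD Rᵐᵒᵖ D dh dv (n - 1) y p) = x p := by
  intro n x ⟨k, hxk⟩ hx
  have hrow' : ∀ p q (v : D (p + 1) q), ∃ u : D p q, dh (p + 1) q v = 0 → dh p q u = v := by
    intro p q v
    by_cases hv : dh (p + 1) q v = 0
    · exact (hrow p q v hv).imp fun _ hu _ => hu
    · exact ⟨0, fun h => absurd h hv⟩
  choose s hs using hrow'
  refine ⟨zigzagPrimitive dv s n k x, ⟨k, fun p => zigzagPrimitive_of_lt dv s n k x⟩, fun p => ?_⟩
  obtain ⟨p, rfl⟩ : ∃ p', p = p' + 1 := ⟨p - 1, by ring⟩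
  exact lcast_totalD_succ_of_dh_eq <| dh_zigzagPrimitive hs hxk <|
    dh_liftTarget_zigzagPrimitive_eq_zero hvv hanti hs hxk hx p
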